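/- arXiv:2409.04223 — 2 statements merged into one kernel-verified Lean document; each statement's English description precedes it below -/
import Mathlib

section
/- Let K₁ = diag(b, c) and K₂ be the 2×2 matrix with single nonzero entry a in position (1,2), where a,b,c are differentiable complex functions of ω satisfying |a|² + |c|² = 1 and |b| = 1 (so K₁†K₁ + K₂†K₂ = I). Define K̃ⱼ' = Kⱼ' − i Σₖ hⱼₖ Kₖ for a Hermitian 2×2 matrix h. Then min over h of Tr(Σⱼ K̃ⱼ'† K̃ⱼ') equals [4|a|²|a'|² + (a*a' − (a')*a)²]/(4|a|²) + [4(|b|²+|c|²)(|b'|²+|c'|²) + (b*b' − (b')*b + c*c' − (c')*c)²]/(4(|b|²+|c|²)), provided a ≠ 0. -/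
open Complex ComplexConjugate

/-!
For real `t`, `‖w - I z t‖²` is the real quadratic `‖z‖² t² - 2 Im(z̄ w) t + ‖w‖²`, and a sum of
such terms sharing `t` is again one, with summed coefficients, whose minimum is
`Σ ‖wᵢ‖² - (Im Σ z̄ᵢ wᵢ)² / Σ ‖zᵢ‖²`. The trace splits into `2|h₁₂|²`, a term in `h₂₂` alone (from `a`)
and a sum in `h₁₁` alone (from `b`, `c`), which are minimised independently; the stated fractions
are these minima since `(x - x̄)² = -4 (Im x)²`.
-/

theorem isLeast_range_quadratic {A : ℝ} (B C : ℝ) (hA : 0 < A) :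
    IsLeast (Set.range fun t : ℝ => A * t ^ 2 - 2 * B * t + C) (C - B ^ 2 / A) := by
  refine ⟨⟨B / A, by field_simp; ring⟩, ?_⟩
  rintro _ ⟨t, rfl⟩
  have hsq : A * t ^ 2 - 2 * B * t + C - (C - B ^ 2 / A) = (A * t - B) ^ 2 / A := by
    field_simp; ring
  have : 0 ≤ (A * t - B) ^ 2 / A := by positivity
  linarith

theorem Complex.sq_norm_sub_I_mul_mul_ofReal (z w : ℂ) (t : ℝ) :
    ‖w - I * z * t‖ ^ 2 = ‖z‖ ^ 2 * t ^ 2 - 2 * (conj z * w).im * t + ‖w‖ ^ 2 := by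
  simp only [Complex.sq_norm, normSq_apply, sub_re, sub_im, mul_re, mul_im, I_re, I_im, conj_re,
    conj_im, ofReal_re, ofReal_im]
  ring

theorem isLeast_range_sum_sq_norm_sub_I_mul_mul_ofReal {ι : Type*} [Fintype ι] (z w : ι → ℂ)
    (hz : 0 < ∑ i, ‖z i‖ ^ 2) :
    IsLeast (Set.range fun t : ℝ => ∑ i, ‖w i - I * z i * t‖ ^ 2)
      (∑ i, ‖w i‖ ^ 2 - (∑ i, conj (z i) * w i).im ^ 2 / ∑ i, ‖z i‖ ^ 2) := by
  have hquad : (fun t : ℝ => ∑ i, ‖w i - I * z i * t‖ ^ 2) = fun t =>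
      (∑ i, ‖z i‖ ^ 2) * t ^ 2 - 2 * (∑ i, conj (z i) * w i).im * t + ∑ i, ‖w i‖ ^ 2 := by
    ext t
    simp only [sq_norm_sub_I_mul_mul_ofReal, Finset.sum_add_distrib, Finset.sum_sub_distrib,
      im_sum, Finset.sum_mul, Finset.mul_sum]
  rw [hquad]
  exact isLeast_range_quadratic _ _ hz

theorem Complex.re_four_mul_add_sub_conj_sq_div {N : ℝ} (M : ℝ) (x : ℂ) (hN : N ≠ 0) :
    ((4 * N * M : ℂ) + (x - conj x) ^ 2).re / (4 * N) = M - x.im ^ 2 / N := by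
  have hsq : (x - conj x) ^ 2 = ((-4 * x.im ^ 2 : ℝ) : ℂ) := by
    rw [sub_conj]; push_cast; linear_combination (4 * (x.im : ℂ) ^ 2) * I_sq
  rw [hsq, ← ofReal_ofNat, ← ofReal_mul, ← ofReal_mul, ← ofReal_add, ofReal_re]
  field_simp
  ring

theorem min_trace_kraus_variation_general
    (a b c : ℝ → ℂ) (ω : ℝ)
    (hbnorm : ‖b ω‖ = 1) (ha0 : a ω ≠ 0) :
    IsLeast
      {r : ℝ | ∃ (h11 h22 : ℝ) (h12 : ℂ),
        r = 2 * ‖h12‖ ^ 2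
          + ‖deriv a ω - Complex.I * a ω * h22‖ ^ 2
          + ‖deriv b ω - Complex.I * b ω * h11‖ ^ 2
          + ‖deriv c ω - Complex.I * c ω * h11‖ ^ 2}
      ((((4 * ‖a ω‖ ^ 2 * ‖deriv a ω‖ ^ 2 : ℂ)
          + ((starRingEnd ℂ) (a ω) * deriv a ω
              - (starRingEnd ℂ) (deriv a ω) * a ω) ^ 2).re) / (4 * ‖a ω‖ ^ 2)
        + (((4 * (‖b ω‖ ^ 2 + ‖c ω‖ ^ 2) * (‖deriv b ω‖ ^ 2 + ‖deriv c ω‖ ^ 2) : ℂ)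
          + ((starRingEnd ℂ) (b ω) * deriv b ω - (starRingEnd ℂ) (deriv b ω) * b ω
              + (starRingEnd ℂ) (c ω) * deriv c ω
              - (starRingEnd ℂ) (deriv c ω) * c ω) ^ 2).re)
            / (4 * (‖b ω‖ ^ 2 + ‖c ω‖ ^ 2))) := by
  have hA : 0 < ‖a ω‖ ^ 2 := pow_pos (norm_pos_iff.mpr ha0) 2
  have hBC : 0 < ‖b ω‖ ^ 2 + ‖c ω‖ ^ 2 := by rw [hbnorm]; positivity
  have hx : conj (a ω) * deriv a ω - conj (deriv a ω) * a ω
      = conj (a ω) * deriv a ω - conj (conj (a ω) * deriv a ω) := by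
    rw [map_mul, conj_conj]; ring
  have hy : conj (b ω) * deriv b ω - conj (deriv b ω) * b ω + conj (c ω) * deriv c ω
      - conj (deriv c ω) * c ω = conj (b ω) * deriv b ω + conj (c ω) * deriv c ω
        - conj (conj (b ω) * deriv b ω + conj (c ω) * deriv c ω) := by
    rw [map_add, map_mul, map_mul, conj_conj, conj_conj]; ring
  have hmin_a := isLeast_range_sum_sq_norm_sub_I_mul_mul_ofReal ![a ω] ![deriv a ω]
    (by simpa using hA)
  have hmin_bc := isLeast_range_sum_sq_norm_sub_I_mul_mul_ofReal ![b ω, c ω]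
    ![deriv b ω, deriv c ω] (by simpa using hBC)
  simp only [Fin.sum_univ_one, Fin.sum_univ_two, Matrix.cons_val_zero, Matrix.cons_val_one]
    at hmin_a hmin_bc
  simp only [hx, hy, ← ofReal_pow, ← ofReal_add]
  rw [re_four_mul_add_sub_conj_sq_div _ _ hA.ne',
    re_four_mul_add_sub_conj_sq_div _ _ hBC.ne']
  constructor
  · obtain ⟨t_a, ht_a⟩ := hmin_a.1
    obtain ⟨t_bc, ht_bc⟩ := hmin_bc.1
    refine ⟨t_bc, t_a, 0, ?_⟩
    rw [← ht_a, ← ht_bc, norm_zero]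
    ring
  · rintro _ ⟨h11, h22, h12, rfl⟩
    have le_a := hmin_a.2 ⟨h22, rfl⟩
    have le_bc := hmin_bc.2 ⟨h11, rfl⟩
    have : 0 ≤ 2 * ‖h12‖ ^ 2 := by positivity
    linarith

/-- Minimization over the Hermitian matrix `h` of `Tr(Σⱼ K̃ⱼ'† K̃ⱼ')` for the Kraus pair
`K₁ = diag(b, c)`, `K₂ = [[0, a], [0, 0]]` of a qubit channel depending on `ω`
(primes denote `ω`-derivatives; the trace equals
`2|h₁₂|² + |a' − i a h₂₂|² + |b' − i b h₁₁|² + |c' − i c h₁₁|²`).  The minimum equals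
`[4|a|²|a'|² + (a*a' − (a')*a)²]/(4|a|²)
  + [4(|b|²+|c|²)(|b'|²+|c'|²) + (b*b' − (b')*b + c*c' − (c')*c)²]/(4(|b|²+|c|²))`. -/
theorem min_trace_kraus_variation
    (a b c : ℝ → ℂ) (ω : ℝ)
    (ha : DifferentiableAt ℝ a ω) (hb : DifferentiableAt ℝ b ω)
    (hc : DifferentiableAt ℝ c ω)
    (hnorm : ‖a ω‖ ^ 2 + ‖c ω‖ ^ 2 = 1) (hbnorm : ‖b ω‖ = 1) (ha0 : a ω ≠ 0) :
    IsLeast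
      {r : ℝ | ∃ (h11 h22 : ℝ) (h12 : ℂ),
        r = 2 * ‖h12‖ ^ 2
          + ‖deriv a ω - Complex.I * a ω * h22‖ ^ 2
          + ‖deriv b ω - Complex.I * b ω * h11‖ ^ 2
          + ‖deriv c ω - Complex.I * c ω * h11‖ ^ 2}
      ((((4 * ‖a ω‖ ^ 2 * ‖deriv a ω‖ ^ 2 : ℂ)
          + ((starRingEnd ℂ) (a ω) * deriv a ω
              - (starRingEnd ℂ) (deriv a ω) * a ω) ^ 2).re) / (4 * ‖a ω‖ ^ 2)
        + (((4 * (‖b ω‖ ^ 2 + ‖c ω‖ ^ 2) * (‖deriv b ω‖ ^ 2 + ‖deriv c ω‖ ^ 2) : ℂ)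
          + ((starRingEnd ℂ) (b ω) * deriv b ω - (starRingEnd ℂ) (deriv b ω) * b ω
              + (starRingEnd ℂ) (c ω) * deriv c ω
              - (starRingEnd ℂ) (deriv c ω) * c ω) ^ 2).re)
            / (4 * (‖b ω‖ ^ 2 + ‖c ω‖ ^ 2))) :=
  min_trace_kraus_variation_general a b c ω hbnorm ha0
end

section
/- Let p₁ = p₄ = ½ sin²(ωT'/2) and p₂ = p₃ = ½ cos²(ωT'/2) be a probability distribution over four outcomes depending on a real parameter ω (with T' > 0 fixed and sin(ωT') ≠ 0). Then the classical Fisher information Σⱼ (∂_ω pⱼ)²/pⱼ equals T'². -/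
/-! With `θ = ωT'/2`, an outcome of probability `½ sin²θ` contributes `½ T'² cos²θ` to the
Fisher information and one of probability `½ cos²θ` contributes `½ T'² sin²θ`; two of each
sum to `T'² (sin²θ + cos²θ) = T'²`. Since `sin(ωT') = 2 sin θ cos θ ≠ 0`, no
probability vanishes. -/

open Real

lemma sin_ne_zero_and_cos_ne_zero_of_sin_two_mul_ne_zero {θ : ℝ} (h : sin (2 * θ) ≠ 0) :
    sin θ ≠ 0 ∧ cos θ ≠ 0 := by
  rw [sin_two_mul] at h
  exact ⟨fun hs => h (by rw [hs]; ring), fun hc => h (by rw [hc]; ring)⟩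

section HalfAngle

variable (c x : ℝ)

lemma hasDerivAt_half_sin_sq_mul_div_two :
    HasDerivAt (fun y => 1 / 2 * sin (y * c / 2) ^ 2)
      (c / 2 * sin (x * c / 2) * cos (x * c / 2)) x := by
  refine ((((hasDerivAt_mul_const c).div_const 2).sin.pow 2).const_mul (1 / 2 : ℝ)).congr_deriv ?_
  push_cast
  ring

lemma hasDerivAt_half_cos_sq_mul_div_two :
    HasDerivAt (fun y => 1 / 2 * cos (y * c / 2) ^ 2)
      (-(c / 2 * sin (x * c / 2) * cos (x * c / 2))) x := by
  refine ((((hasDerivAt_mul_const c).div_const 2).cos.pow 2).const_mul (1 / 2 : ℝ)).congr_deriv ?_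
  push_cast
  ring

variable {c x}

lemma deriv_sq_div_half_sin_sq (hs : sin (x * c / 2) ≠ 0) :
    deriv (fun y => 1 / 2 * sin (y * c / 2) ^ 2) x ^ 2 / (1 / 2 * sin (x * c / 2) ^ 2) =
      c ^ 2 / 2 * cos (x * c / 2) ^ 2 := by
  rw [(hasDerivAt_half_sin_sq_mul_div_two c x).deriv]
  rw [div_eq_iff (by positivity)]
  ring

lemma deriv_sq_div_half_cos_sq (hc : cos (x * c / 2) ≠ 0) :
    deriv (fun y => 1 / 2 * cos (y * c / 2) ^ 2) x ^ 2 / (1 / 2 * cos (x * c / 2) ^ 2) =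
      c ^ 2 / 2 * sin (x * c / 2) ^ 2 := by
  rw [(hasDerivAt_half_cos_sq_mul_div_two c x).deriv]
  rw [div_eq_iff (by positivity)]
  ring

end HalfAngle

theorem fisher_information_of_control_measurement_general (ω T' : ℝ)
    (hsin : Real.sin (ω * T') ≠ 0) :
    let p : Fin 4 → ℝ → ℝ := fun j x =>
      if j = 0 ∨ j = 3 then 1 / 2 * Real.sin (x * T' / 2) ^ 2
      else 1 / 2 * Real.cos (x * T' / 2) ^ 2
    (∑ j : Fin 4, (deriv (p j) ω) ^ 2 / p j ω) = T' ^ 2 := by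
  intro p
  obtain ⟨hs, hc⟩ := sin_ne_zero_and_cos_ne_zero_of_sin_two_mul_ne_zero (θ := ω * T' / 2)
    (by rwa [mul_div_cancel₀ _ two_ne_zero])
  simp only [p, Fin.sum_univ_four, Fin.isValue, Fin.reduceEq, true_or, or_true, or_self,
    ite_true, ite_false]
  rw [deriv_sq_div_half_sin_sq hs, deriv_sq_div_half_cos_sq hc]
  linear_combination T' ^ 2 * sin_sq_add_cos_sq (ω * T' / 2)

/-- For the four-outcome distribution `p₁ = p₄ = ½ sin²(ωT'/2)`,
`p₂ = p₃ = ½ cos²(ωT'/2)` (with `T' > 0` and `sin(ωT') ≠ 0`, so all `pⱼ > 0`),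
the classical Fisher information `Σⱼ (∂_ω pⱼ)²/pⱼ` equals `T'²`. -/
theorem fisher_information_of_control_measurement (ω T' : ℝ) (hT' : 0 < T')
    (hsin : Real.sin (ω * T') ≠ 0) :
    let p : Fin 4 → ℝ → ℝ := fun j x =>
      if j = 0 ∨ j = 3 then 1 / 2 * Real.sin (x * T' / 2) ^ 2
      else 1 / 2 * Real.cos (x * T' / 2) ^ 2
    (∑ j : Fin 4, (deriv (p j) ω) ^ 2 / p j ω) = T' ^ 2 :=
  fisher_information_of_control_measurement_general ω T' hsin
end
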